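/- arXiv:2502.04142 — 2 statements merged into one kernel-verified Lean document; each statement's English description precedes it below -/
import Mathlib

section
/- Let G_s be a symmetric nonnegative-definite real n×n matrix whose smallest eigenvalue is at least β > 0, and let G_a be antisymmetric with κ the largest eigenvalue of G_aᵀG_a. Then there exists R > 0 such that for all 0 < ρ < R and all x ∈ ℝⁿ, ‖(I − ρG_s − ρG_a)x‖₂ ≤ (1 − ρβ/2)‖x‖₂. -/
/-!
With `B = G_s + G_a`, the skew part drops out of the quadratic form, so `⟪x, Bx⟫ ≥ β‖x‖²`.
Expanding, `‖x - ρBx‖² ≤ (1 - 2ρβ + ρ²‖B‖²)‖x‖²`, which is at most `(1 - ρβ/2)²‖x‖²` as soon as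
`ρ‖B‖² ≤ β` and `ρβ ≤ 2`.
-/

open Matrix
open scoped RealInnerProductSpace

theorem Matrix.dotProduct_mulVec_self_eq_zero_of_transpose_eq_neg {ι R : Type*} [Fintype ι]
    [CommRing R] [IsAddTorsionFree R] {A : Matrix ι ι R} (hA : Aᵀ = -A) (x : ι → R) :
    x ⬝ᵥ A *ᵥ x = 0 := by
  rw [← self_eq_neg]
  calc x ⬝ᵥ A *ᵥ x = Aᵀ *ᵥ x ⬝ᵥ x := by rw [dotProduct_mulVec, mulVec_transpose]
    _ = -(x ⬝ᵥ A *ᵥ x) := by rw [hA, neg_mulVec, neg_dotProduct, dotProduct_comm]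

section Contraction

variable {E : Type*} [NormedAddCommGroup E] [InnerProductSpace ℝ E]

/-- Since `(1 - ρβ/2)² ≥ 1 - ρβ`, it suffices that `ρ²‖z‖²` is absorbed by half of `2ρ⟪x, z⟫`. -/
theorem norm_sub_smul_le_of_inner_ge {x z : E} {β C ρ : ℝ} (hxz : β * ‖x‖ ^ 2 ≤ ⟪x, z⟫)
    (hz : ‖z‖ ≤ C * ‖x‖) (hρ : 0 ≤ ρ) (hρC : ρ * C ^ 2 ≤ β) (hρβ : ρ * β ≤ 2) :
    ‖x - ρ • z‖ ≤ (1 - ρ * β / 2) * ‖x‖ := by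
  have hz_sq : ‖z‖ ^ 2 ≤ C ^ 2 * ‖x‖ ^ 2 := by
    rw [← mul_pow]; exact pow_le_pow_left₀ (norm_nonneg z) hz 2
  have h_sq : ‖x - ρ • z‖ ^ 2 ≤ ((1 - ρ * β / 2) * ‖x‖) ^ 2 := by
    rw [norm_sub_sq_real, real_inner_smul_right, norm_smul, Real.norm_of_nonneg hρ]
    nlinarith [mul_le_mul_of_nonneg_left hz_sq (sq_nonneg ρ),
      mul_le_mul_of_nonneg_left hxz hρ, mul_nonneg hρ (sq_nonneg ‖x‖),
      mul_nonneg (mul_nonneg hρ (sub_nonneg.2 hρC)) (sq_nonneg ‖x‖)]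
  exact (sq_le_sq₀ (norm_nonneg _) (by nlinarith [norm_nonneg x])).1 h_sq

theorem ContinuousLinearMap.exists_norm_sub_smul_apply_le (T : E →L[ℝ] E) {β : ℝ} (hβ : 0 < β)
    (hT : ∀ x, β * ‖x‖ ^ 2 ≤ ⟪x, T x⟫) :
    ∃ R > 0, ∀ ρ, 0 < ρ → ρ < R → ∀ x, ‖x - ρ • T x‖ ≤ (1 - ρ * β / 2) * ‖x‖ := by
  refine ⟨min (β / (‖T‖ ^ 2 + 1)) (2 / β), by positivity, fun ρ hρ hρR x => ?_⟩
  have hρC : ρ * ‖T‖ ^ 2 ≤ β := by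
    have := (lt_div_iff₀ (by positivity)).1 (hρR.trans_le (min_le_left _ _))
    nlinarith
  have hρβ : ρ * β ≤ 2 := ((lt_div_iff₀ hβ).1 (hρR.trans_le (min_le_right _ _))).le
  exact norm_sub_smul_le_of_inner_ge (hT x) (T.le_opNorm x) hρ.le hρC hρβ

end Contraction

theorem EuclideanSpace.sqrt_sum_sq_eq_norm {ι : Type*} [Fintype ι] (x : ι → ℝ) :
    Real.sqrt (∑ i, (x i) ^ 2) = ‖WithLp.toLp 2 x‖ := by
  rw [← EuclideanSpace.real_norm_sq_eq, Real.sqrt_sq (norm_nonneg _)]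

theorem stmt_11_general (n : ℕ) (Gs Ga : Matrix (Fin n) (Fin n) ℝ)
    (β : ℝ) (hβ : 0 < β)
    (hGsβ : ∀ x : Fin n → ℝ, β * ∑ i, (x i)^2 ≤ x ⬝ᵥ Gs.mulVec x)
    (hGa : Ga.transpose = -Ga) :
    ∃ R : ℝ, 0 < R ∧ ∀ ρ : ℝ, 0 < ρ → ρ < R → ∀ x : Fin n → ℝ,
      Real.sqrt (∑ i, (((1 : Matrix (Fin n) (Fin n) ℝ) - ρ • Gs - ρ • Ga).mulVec x i)^2)
        ≤ (1 - ρ * β / 2) * Real.sqrt (∑ i, (x i)^2) := by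
  have hcoercive (x : EuclideanSpace ℝ (Fin n)) :
      β * ‖x‖ ^ 2 ≤ ⟪x, toEuclideanCLM (𝕜 := ℝ) (Gs + Ga) x⟫ := by
    rw [inner_toEuclideanCLM, add_mulVec, dotProduct_add,
      dotProduct_mulVec_self_eq_zero_of_transpose_eq_neg hGa, add_zero,
      EuclideanSpace.real_norm_sq_eq]
    exact hGsβ x.ofLp
  obtain ⟨R, hR, hcontract⟩ :=
    (toEuclideanCLM (𝕜 := ℝ) (Gs + Ga)).exists_norm_sub_smul_apply_le hβ hcoercive
  refine ⟨R, hR, fun ρ hρ hρR x => ?_⟩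
  have hstep :
      ((1 : Matrix (Fin n) (Fin n) ℝ) - ρ • Gs - ρ • Ga) *ᵥ x = x - ρ • ((Gs + Ga) *ᵥ x) := by
    rw [sub_sub, ← smul_add, sub_mulVec, one_mulVec, smul_mulVec]
  rw [EuclideanSpace.sqrt_sum_sq_eq_norm, EuclideanSpace.sqrt_sum_sq_eq_norm, hstep,
    WithLp.toLp_sub, WithLp.toLp_smul, ← toEuclideanCLM_toLp]
  exact hcontract ρ hρ hρR _

theorem stmt_11 (n : ℕ) (Gs Ga : Matrix (Fin n) (Fin n) ℝ)
    (hGs : Gs.transpose = Gs) (β : ℝ) (hβ : 0 < β)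
    (hGsβ : ∀ x : Fin n → ℝ, β * ∑ i, (x i)^2 ≤ x ⬝ᵥ Gs.mulVec x)
    (hGa : Ga.transpose = -Ga)
    (hH : (Ga.transpose * Ga).IsHermitian) (κ : ℝ)
    (hκ : IsGreatest (Set.range hH.eigenvalues) κ) :
    ∃ R : ℝ, 0 < R ∧ ∀ ρ : ℝ, 0 < ρ → ρ < R → ∀ x : Fin n → ℝ,
      Real.sqrt (∑ i, (((1 : Matrix (Fin n) (Fin n) ℝ) - ρ • Gs - ρ • Ga).mulVec x i)^2)
        ≤ (1 - ρ * β / 2) * Real.sqrt (∑ i, (x i)^2) :=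
  stmt_11_general n Gs Ga β hβ hGsβ hGa
end

section
/- Let T be a grid with N = ∏ᵢ (1/hᵢ)-order many interior points split into an interior set T₀ with |T₀| ≤ C/∏ᵢhᵢ where the local truncation error is bounded by C h², and a boundary-layer set T₁ with |T₁| ≤ C(∑ᵢhᵢ)/∏ᵢhᵢ where the local truncation error is bounded by C hᵠ. Then the weighted ℓ² global truncation error satisfies (∏ᵢ hᵢ)^{1/2} ‖τ‖_{ℓ²(T)} ≤ C' h^{min{2, q + 1/2}} for a constant C' independent of h, where h = maxᵢ hᵢ. -/
/-!
Each block of the grid contributes at most (cell volume) · |block| · (error bound)²: for the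
interior this is `C · (C H²)² ~ H⁴`, and for the boundary layer, whose size carries the extra factor
`∑ hᵢ ≤ d H`, it is `~ H · H^{2q}`. Since `H ≤ 1`, both are `O(H^{2 min 2 (q + 1/2)})`, and taking
square roots gives the claim.
-/

open Finset

theorem mul_sum_sq_le_of_card_le_div {ι : Type*} {s : Finset ι} {f : ι → ℝ} {P K b : ℝ}
    (hP : 0 < P) (hcard : (#s : ℝ) ≤ K / P) (hf : ∀ x ∈ s, |f x| ≤ b) :
    P * ∑ x ∈ s, f x ^ 2 ≤ K * b ^ 2 := by
  have hsum : ∑ x ∈ s, f x ^ 2 ≤ #s * b ^ 2 := by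
    simpa using sum_le_card_nsmul s (f · ^ 2) (b ^ 2) fun x hx =>
      sq_le_sq' (abs_le.mp (hf x hx)).1 (abs_le.mp (hf x hx)).2
  have hPcard : #s * P ≤ K := (le_div_iff₀ hP).mp hcard
  calc P * ∑ x ∈ s, f x ^ 2 ≤ P * (#s * b ^ 2) := by gcongr
    _ = (#s * P) * b ^ 2 := by ring
    _ ≤ K * b ^ 2 := by gcongr

theorem Real.pow_two_le_rpow_min {H : ℝ} (hH0 : 0 < H) (hH1 : H ≤ 1) (q : ℝ) :
    H ^ 2 ≤ H ^ min 2 (q + 1 / 2) := by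
  simpa using Real.rpow_le_rpow_of_exponent_ge hH0 hH1 (min_le_left 2 (q + 1 / 2))

theorem Real.rpow_mul_sqrt_le_rpow_min {H : ℝ} (hH0 : 0 < H) (hH1 : H ≤ 1) (q : ℝ) :
    H ^ q * √H ≤ H ^ min 2 (q + 1 / 2) := by
  rw [Real.sqrt_eq_rpow, ← Real.rpow_add hH0]
  exact Real.rpow_le_rpow_of_exponent_ge hH0 hH1 (min_le_right _ _)

theorem stmt_18_general (d : ℕ) (C : ℝ) (hC : 0 < C) (q : ℝ) :
    ∃ C' : ℝ, 0 < C' ∧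
      ∀ (h : Fin d → ℝ), (∀ i, 0 < h i) → (∀ i, h i ≤ 1) →
      ∀ (H : ℝ), IsGreatest (Set.range h) H →
      ∀ (ι : Type) [DecidableEq ι] (T₀ T₁ : Finset ι) (τ : ι → ℝ),
        Disjoint T₀ T₁ →
        (T₀.card : ℝ) ≤ C / ∏ i, h i →
        (T₁.card : ℝ) ≤ C * (∑ i, h i) / ∏ i, h i →
        (∀ x ∈ T₀, |τ x| ≤ C * H^2) →
        (∀ x ∈ T₁, |τ x| ≤ C * H^q) →
        (∏ i, h i)^((1:ℝ)/2) * Real.sqrt (∑ x ∈ T₀ ∪ T₁, (τ x)^2)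
          ≤ C' * H^(min 2 (q + 1/2)) := by
  refine ⟨√(C ^ 3 * (1 + d)), by positivity, ?_⟩
  rintro h hpos hle H ⟨⟨i₀, rfl⟩, hH⟩ ι _ T₀ T₁ τ hdisj hcard₀ hcard₁ hτ₀ hτ₁
  set H := h i₀
  have hH0 : 0 < H := hpos i₀
  have hP : 0 < ∏ i, h i := prod_pos fun i _ => hpos i
  have hsum : ∑ i, h i ≤ d * H := by
    simpa using sum_le_card_nsmul univ h H fun i _ => hH ⟨i, rfl⟩
  have hint := mul_sum_sq_le_of_card_le_div hP hcard₀ hτ₀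
  have hbdry := mul_sum_sq_le_of_card_le_div hP hcard₁ hτ₁
  rw [← Real.sqrt_eq_rpow, ← Real.sqrt_mul hP.le, Real.sqrt_le_iff]
  refine ⟨by positivity, ?_⟩
  rw [mul_pow, Real.sq_sqrt (by positivity), sum_union hdisj, mul_add]
  calc _ ≤ C * (C * H ^ 2) ^ 2 + C * (∑ i, h i) * (C * H ^ q) ^ 2 := add_le_add hint hbdry
    _ ≤ C * (C * H ^ 2) ^ 2 + C * (d * H) * (C * H ^ q) ^ 2 := by gcongr
    _ = C ^ 3 * (H ^ 2) ^ 2 + C ^ 3 * d * (H ^ q * √H) ^ 2 := by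
      rw [mul_pow (H ^ q), Real.sq_sqrt hH0.le]
      ring
    _ ≤ C ^ 3 * (H ^ min 2 (q + 1 / 2)) ^ 2 + C ^ 3 * d * (H ^ min 2 (q + 1 / 2)) ^ 2 := by
      gcongr
      exacts [Real.pow_two_le_rpow_min hH0 (hle i₀) q,
        Real.rpow_mul_sqrt_le_rpow_min hH0 (hle i₀) q]
    _ = C ^ 3 * (1 + d) * (H ^ min 2 (q + 1 / 2)) ^ 2 := by ring

theorem stmt_18 (d : ℕ) (hd : 0 < d) (C : ℝ) (hC : 0 < C) (q : ℝ)
    (hq0 : 0 ≤ q) (hq2 : q ≤ 2) :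
    ∃ C' : ℝ, 0 < C' ∧
      ∀ (h : Fin d → ℝ), (∀ i, 0 < h i) → (∀ i, h i ≤ 1) →
      ∀ (H : ℝ), IsGreatest (Set.range h) H →
      ∀ (ι : Type) [DecidableEq ι] (T₀ T₁ : Finset ι) (τ : ι → ℝ),
        Disjoint T₀ T₁ →
        (T₀.card : ℝ) ≤ C / ∏ i, h i →
        (T₁.card : ℝ) ≤ C * (∑ i, h i) / ∏ i, h i →
        (∀ x ∈ T₀, |τ x| ≤ C * H^2) →
        (∀ x ∈ T₁, |τ x| ≤ C * H^q) →
        (∏ i, h i)^((1:ℝ)/2) * Real.sqrt (∑ x ∈ T₀ ∪ T₁, (τ x)^2)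
          ≤ C' * H^(min 2 (q + 1/2)) :=
  stmt_18_general d C hC q
end
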